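/- arXiv:2206.15181 — 3 statements merged into one kernel-verified Lean document; each statement's English description precedes it below -/
import Mathlib

section
/- For the hypergeometric differential operator t(1−t)d²/dt² + (1−2t)d/dt − 1/4 with solution δ(t) = ∫_t^1 dx/√(x(x−1)(x−t)), the function κ(s) = s² ∫₀¹ t^{s−1} δ(t) dt equals π s² Γ(s)²/Γ(s+½)² = 16^s Γ(1+s)⁴/Γ(1+2s)². -/
open Real

section Aux

open MeasureTheory Set intervalIntegral

lemma beta_pointwise {s : ℝ} (x : ℝ) (hx : x ∈ Set.Ioc (0:ℝ) 1) :
    ((x:ℂ) ^ ((s:ℂ) - 1) * (1 - (x:ℂ)) ^ ((1/2:ℂ) - 1)) =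
      ((x ^ (s - 1) * (1 - x) ^ (-(1/2) : ℝ) : ℝ) : ℂ) := by
  have hx0 : (0:ℝ) ≤ x := hx.1.le
  have hx1 : (0:ℝ) ≤ 1 - x := by linarith [hx.2]
  rw [show ((1/2:ℂ) - 1) = ((-(1/2):ℝ):ℂ) by norm_num,
    show ((s:ℂ) - 1) = ((s - 1 : ℝ):ℂ) by push_cast; ring,
    show (1 - (x:ℂ)) = ((1 - x : ℝ):ℂ) by push_cast; ring,
    ← Complex.ofReal_cpow hx0, ← Complex.ofReal_cpow hx1, ← Complex.ofReal_mul]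

lemma realBeta_integrable {s : ℝ} (hs : 0 < s) :
    IntervalIntegrable (fun x : ℝ => x ^ (s - 1) * (1 - x) ^ (-(1/2) : ℝ)) volume 0 1 := by
  have h := (Complex.betaIntegral_convergent (u := (s : ℂ)) (v := (1/2 : ℂ))
    (by simpa using hs) (by norm_num)).norm
  apply h.congr_ae
  rw [Set.uIoc_of_le (by norm_num : (0:ℝ) ≤ 1)]
  filter_upwards [ae_restrict_mem measurableSet_Ioc] with x hx
  rw [beta_pointwise x hx, Complex.norm_real, Real.norm_eq_abs, abs_of_nonneg]
  exact mul_nonneg (Real.rpow_nonneg hx.1.le _) (Real.rpow_nonneg (by linarith [hx.2]) _)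

lemma realBeta_value {s : ℝ} (hs : 0 < s) :
    ∫ x in (0:ℝ)..1, x ^ (s - 1) * (1 - x) ^ (-(1/2) : ℝ) =
      Real.sqrt π * Real.Gamma s / Real.Gamma (s + 1/2) := by
  have key : Complex.betaIntegral s (1/2) =
      ((∫ x in (0:ℝ)..1, x ^ (s - 1) * (1 - x) ^ (-(1/2) : ℝ) : ℝ) : ℂ) := by
    rw [Complex.betaIntegral, ← intervalIntegral.integral_ofReal]
    refine intervalIntegral.integral_congr_ae (Filter.Eventually.of_forall fun x hx => ?_)
    rw [Set.uIoc_of_le (by norm_num : (0:ℝ) ≤ 1)] at hx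
    exact beta_pointwise x hx
  have hG := Complex.Gamma_mul_Gamma_eq_betaIntegral (s := (s:ℂ)) (t := (1/2:ℂ))
    (by simpa using hs) (by norm_num)
  rw [key] at hG
  have hGhalf : Real.Gamma (1/2) = Real.sqrt π := Real.Gamma_one_half_eq
  have hGpos : 0 < Real.Gamma (s + 1/2) := Real.Gamma_pos_of_pos (by linarith)
  have hG' : Real.Gamma s * Real.Gamma (1/2) =
      Real.Gamma (s + 1/2) * ∫ x in (0:ℝ)..1, x ^ (s - 1) * (1 - x) ^ (-(1/2) : ℝ) := by
    have := hG
    rw [show ((s:ℂ) + 1/2) = ((s + 1/2 : ℝ) : ℂ) by push_cast; ring,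
      show ((1/2:ℂ)) = ((1/2 : ℝ) : ℂ) by norm_num, Complex.Gamma_ofReal,
      Complex.Gamma_ofReal, Complex.Gamma_ofReal, ← Complex.ofReal_mul,
      ← Complex.ofReal_mul] at this
    exact_mod_cast this
  rw [hGhalf] at hG'
  rw [eq_div_iff hGpos.ne']
  linarith [hG']

lemma inner_comp_eq {s x : ℝ} (hx : 0 < x) :
    ∀ u ∈ Set.Ioc (0:ℝ) 1,
      ((x*u) ^ (s - 1) * (x - x*u) ^ (-(1/2) : ℝ)) =
        x ^ (s - 3/2) * (u ^ (s - 1) * (1 - u) ^ (-(1/2) : ℝ)) := by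
  intro u hu
  have h1 : x - x*u = x * (1 - u) := by ring
  rw [h1, Real.mul_rpow hx.le hu.1.le, Real.mul_rpow hx.le (by linarith [hu.2]),
    show x ^ (s - 3/2) = x ^ (s-1) * x ^ (-(1/2):ℝ) by
      rw [← Real.rpow_add hx]; ring_nf]
  ring

lemma inner_integrable {s x : ℝ} (hs : 0 < s) (hx : 0 < x) :
    IntervalIntegrable (fun t : ℝ => t ^ (s - 1) * (x - t) ^ (-(1/2) : ℝ)) volume 0 x := by
  have h1 : IntervalIntegrable
      (fun u : ℝ => ((x*u) ^ (s - 1) * (x - x*u) ^ (-(1/2) : ℝ))) volume 0 1 := by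
    apply ((realBeta_integrable hs).const_mul (x ^ (s - 3/2))).congr_ae
    rw [Set.uIoc_of_le (by norm_num : (0:ℝ) ≤ 1)]
    filter_upwards [ae_restrict_mem measurableSet_Ioc] with u hu
    exact (inner_comp_eq hx u hu).symm
  exact (IntervalIntegrable.comp_mul_left_iff (f := fun t : ℝ => t ^ (s - 1) * (x - t) ^ (-(1/2) : ℝ))
    (a := 0) (b := x) hx.ne').mp (by simpa [hx.ne'] using h1)

lemma inner_value {s x : ℝ} (hs : 0 < s) (hx : 0 < x) :
    ∫ t in (0:ℝ)..x, t ^ (s - 1) * (x - t) ^ (-(1/2) : ℝ) =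
      x ^ (s - 1/2) * ∫ u in (0:ℝ)..1, u ^ (s - 1) * (1 - u) ^ (-(1/2) : ℝ) := by
  have h0 := intervalIntegral.smul_integral_comp_mul_left
    (f := fun t : ℝ => t ^ (s - 1) * (x - t) ^ (-(1/2) : ℝ)) (a := 0) (b := 1) x
  simp only [mul_zero, mul_one] at h0
  rw [← h0]
  have h1 : (∫ u in (0:ℝ)..1, ((x*u) ^ (s - 1) * (x - x*u) ^ (-(1/2) : ℝ))) =
      x ^ (s - 3/2) * ∫ u in (0:ℝ)..1, u ^ (s - 1) * (1 - u) ^ (-(1/2) : ℝ) := by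
    rw [← intervalIntegral.integral_const_mul]
    refine intervalIntegral.integral_congr_ae (Filter.Eventually.of_forall fun u hu => ?_)
    rw [Set.uIoc_of_le (by norm_num : (0:ℝ) ≤ 1)] at hu
    exact inner_comp_eq hx u hu
  rw [h1, smul_eq_mul, ← mul_assoc,
    show x * x ^ (s - 3/2) = x ^ (s - 1/2) by
      rw [show s - 1/2 = 1 + (s - 3/2) by ring, Real.rpow_add hx, Real.rpow_one]]

/-- The kernel of the double integral, with the region `t < x` encoded by an indicator. -/
noncomputable def Gker : ℝ × ℝ → ENNReal := fun q =>
  Set.indicator {q : ℝ × ℝ | q.1 < q.2}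
    (fun q => ENNReal.ofReal (1 / Real.sqrt (q.2 * (1 - q.2) * (q.2 - q.1)))) q

lemma Gker_meas : Measurable Gker := by
  apply Measurable.indicator
  · fun_prop
  · exact measurableSet_lt measurable_fst measurable_snd

lemma one_div_sqrt_eq {a : ℝ} (ha : 0 ≤ a) : 1 / Real.sqrt a = a ^ (-(1/2) : ℝ) := by
  rw [Real.sqrt_eq_rpow, one_div, ← Real.rpow_neg ha]

lemma claim1 {s : ℝ} (hs : 0 < s) :
    (∫⁻ t in Set.Ioo (0:ℝ) 1, ENNReal.ofReal (t ^ (s-1)) * ∫⁻ x in Set.Ioo (0:ℝ) 1, Gker (t, x)) =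
      ENNReal.ofReal ((∫ u in (0:ℝ)..1, u ^ (s - 1) * (1 - u) ^ (-(1/2) : ℝ)) ^ 2) := by
  set B2 : ℝ := ∫ u in (0:ℝ)..1, u ^ (s - 1) * (1 - u) ^ (-(1/2) : ℝ) with hB2
  have hB2nn : 0 ≤ B2 := by
    rw [hB2, intervalIntegral.integral_of_le (by norm_num : (0:ℝ) ≤ 1)]
    apply setIntegral_nonneg measurableSet_Ioc
    intro u hu
    exact mul_nonneg (Real.rpow_nonneg hu.1.le _) (Real.rpow_nonneg (by linarith [hu.2]) _)
  have step1 : ∀ t : ℝ,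
      ENNReal.ofReal (t ^ (s-1)) * (∫⁻ x in Set.Ioo (0:ℝ) 1, Gker (t, x)) =
        ∫⁻ x in Set.Ioo (0:ℝ) 1, ENNReal.ofReal (t ^ (s-1)) * Gker (t, x) := fun t =>
    (lintegral_const_mul' _ _ ENNReal.ofReal_ne_top).symm
  simp_rw [step1]
  rw [lintegral_lintegral_swap]
  swap
  · exact ((Measurable.mul (by fun_prop) Gker_meas) :
      Measurable fun p : ℝ × ℝ => ENNReal.ofReal (p.1 ^ (s-1)) * Gker p).aemeasurable
  have step3 : ∀ x ∈ Set.Ioo (0:ℝ) 1,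
      (∫⁻ t in Set.Ioo (0:ℝ) 1, ENNReal.ofReal (t ^ (s-1)) * Gker (t, x)) =
        ENNReal.ofReal ((1 / Real.sqrt (x * (1-x))) * (x ^ (s - 1/2) * B2)) := by
    intro x hx
    have hx0 := hx.1
    have hx1 := hx.2
    have h1 : (fun t => ENNReal.ofReal (t ^ (s-1)) * Gker (t, x)) =
        Set.indicator (Set.Iio x) (fun t =>
          ENNReal.ofReal (t ^ (s-1)) *
            ENNReal.ofReal (1 / Real.sqrt (x * (1 - x) * (x - t)))) := by
      ext t
      by_cases h : t < x <;>
        simp [Gker, Set.indicator_apply, Set.mem_setOf_eq, Set.mem_Iio, h]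
    rw [h1, lintegral_indicator measurableSet_Iio, Measure.restrict_restrict measurableSet_Iio,
      show Set.Iio x ∩ Set.Ioo (0:ℝ) 1 = Set.Ioo 0 x by
        ext y; simp only [Set.mem_inter_iff, Set.mem_Iio, Set.mem_Ioo]
        constructor
        · rintro ⟨h, h2, _⟩; exact ⟨h2, h⟩
        · rintro ⟨h, h2⟩; exact ⟨h2, h, lt_trans h2 hx1⟩]
    have h2 : ∫⁻ t in Set.Ioo (0:ℝ) x,
        ENNReal.ofReal (t ^ (s-1)) * ENNReal.ofReal (1 / Real.sqrt (x * (1 - x) * (x - t))) =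
        ∫⁻ t in Set.Ioo (0:ℝ) x, ENNReal.ofReal
          ((1 / Real.sqrt (x * (1-x))) * (t ^ (s-1) * (x - t) ^ (-(1/2) : ℝ))) := by
      refine setLIntegral_congr_fun_ae measurableSet_Ioo (ae_of_all _ fun t ht => ?_)
      rw [← ENNReal.ofReal_mul (Real.rpow_nonneg ht.1.le _)]
      congr 1
      have hxt : (0:ℝ) < x - t := by linarith [ht.2]
      have hxx : (0:ℝ) ≤ x * (1 - x) := mul_nonneg hx0.le (by linarith)
      rw [Real.sqrt_mul hxx, ← one_div_sqrt_eq hxt.le]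
      rw [one_div, one_div, one_div, mul_inv]
      ring
    rw [h2, ← ofReal_integral_eq_lintegral_ofReal]
    · congr 1
      rw [MeasureTheory.integral_const_mul]
      congr 1
      rw [← integral_Ioc_eq_integral_Ioo, ← intervalIntegral.integral_of_le hx0.le]
      exact inner_value hs hx0
    · exact ((intervalIntegrable_iff_integrableOn_Ioc_of_le hx0.le).mp
        (inner_integrable hs hx0)).mono_set Set.Ioo_subset_Ioc_self |>.const_mul _
    · filter_upwards [ae_restrict_mem measurableSet_Ioo] with t ht
      exact mul_nonneg (one_div_nonneg.mpr (Real.sqrt_nonneg _))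
        (mul_nonneg (Real.rpow_nonneg ht.1.le _)
          (Real.rpow_nonneg (by linarith [ht.2]) _))
  rw [setLIntegral_congr_fun_ae measurableSet_Ioo (ae_of_all _ step3)]
  have step4 : ∀ x ∈ Set.Ioo (0:ℝ) 1,
      ENNReal.ofReal ((1 / Real.sqrt (x * (1-x))) * (x ^ (s - 1/2) * B2)) =
        ENNReal.ofReal ((x ^ (s-1) * (1-x) ^ (-(1/2):ℝ)) * B2) := by
    intro x hx
    congr 1
    have hx0 := hx.1
    have hx1 : (0:ℝ) < 1 - x := by linarith [hx.2]
    rw [Real.sqrt_mul hx0.le, one_div, mul_inv, ← one_div, ← one_div,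
      one_div_sqrt_eq hx0.le, one_div_sqrt_eq hx1.le]
    rw [show x ^ (-(1/2):ℝ) * (1-x) ^ (-(1/2):ℝ) * (x ^ (s - 1/2) * B2) =
      (x ^ (-(1/2):ℝ) * x ^ (s - 1/2)) * ((1-x) ^ (-(1/2):ℝ) * B2) by ring,
      ← Real.rpow_add hx0]
    ring_nf
  rw [setLIntegral_congr_fun_ae measurableSet_Ioo (ae_of_all _ step4),
    ← ofReal_integral_eq_lintegral_ofReal]
  · congr 1
    rw [MeasureTheory.integral_mul_const, ← integral_Ioc_eq_integral_Ioo,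
      ← intervalIntegral.integral_of_le (by norm_num : (0:ℝ) ≤ 1), ← hB2, sq]
  · exact ((intervalIntegrable_iff_integrableOn_Ioc_of_le (by norm_num : (0:ℝ) ≤ 1)).mp
      (realBeta_integrable hs)).mono_set Set.Ioo_subset_Ioc_self |>.mul_const _
  · filter_upwards [ae_restrict_mem measurableSet_Ioo] with x hx
    exact mul_nonneg (mul_nonneg (Real.rpow_nonneg hx.1.le _)
      (Real.rpow_nonneg (by linarith [hx.2]) _)) hB2nn

end Aux

/-- The period `δ(t) = ∫_t^1 dx/√(x(1-x)(x-t))` of the Legendre family, analytic near `t = 1`. -/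
noncomputable def deltaPeriod (t : ℝ) : ℝ := ∫ x in t..1, 1 / Real.sqrt (x * (1 - x) * (x - t))

section Aux2

open MeasureTheory Set intervalIntegral

lemma Gker_slice {t : ℝ} (ht : t ∈ Set.Ioo (0:ℝ) 1) :
    ∫⁻ x in Set.Ioo (0:ℝ) 1, Gker (t, x) =
      ∫⁻ x in Set.Ioo t 1, ENNReal.ofReal (1 / Real.sqrt (x * (1 - x) * (x - t))) := by
  have h1 : (fun x => Gker (t, x)) =
      Set.indicator (Set.Ioi t) (fun x => ENNReal.ofReal (1 / Real.sqrt (x * (1 - x) * (x - t)))) := by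
    ext x
    simp [Gker, Set.indicator_apply, Set.mem_Ioi, Set.mem_setOf_eq]
  rw [h1, lintegral_indicator measurableSet_Ioi, Measure.restrict_restrict measurableSet_Ioi,
    show Set.Ioi t ∩ Set.Ioo (0:ℝ) 1 = Set.Ioo t 1 by
      ext y; simp only [Set.mem_inter_iff, Set.mem_Ioi, Set.mem_Ioo]
      constructor
      · rintro ⟨h, _, h2⟩; exact ⟨h, h2⟩
      · rintro ⟨h, h2⟩; exact ⟨h, lt_trans ht.1 h, h2⟩]

lemma claim2 {s : ℝ}
    (hfin : (∫⁻ t in Set.Ioo (0:ℝ) 1,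
      ENNReal.ofReal (t ^ (s-1)) * ∫⁻ x in Set.Ioo (0:ℝ) 1, Gker (t, x)) ≠ ⊤) :
    ∫ t in (0:ℝ)..1, t ^ (s - 1) * deltaPeriod t =
      (∫⁻ t in Set.Ioo (0:ℝ) 1,
        ENNReal.ofReal (t ^ (s-1)) * ∫⁻ x in Set.Ioo (0:ℝ) 1, Gker (t, x)).toReal := by
  have hmeas : Measurable (fun t : ℝ =>
      ENNReal.ofReal (t ^ (s-1)) * ∫⁻ x in Set.Ioo (0:ℝ) 1, Gker (t, x)) := by
    exact (by fun_prop : Measurable fun t : ℝ => ENNReal.ofReal (t ^ (s-1))).mul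
      (Measurable.lintegral_prod_right (f := fun t x => Gker (t, x)) Gker_meas)
  have hpt : ∀ t ∈ Set.Ioo (0:ℝ) 1, t ^ (s - 1) * deltaPeriod t =
      (ENNReal.ofReal (t ^ (s-1)) * ∫⁻ x in Set.Ioo (0:ℝ) 1, Gker (t, x)).toReal := by
    intro t ht
    have hd : deltaPeriod t = (∫⁻ x in Set.Ioo (0:ℝ) 1, Gker (t, x)).toReal := by
      rw [Gker_slice ht, deltaPeriod, intervalIntegral.integral_of_le ht.2.le,
        integral_Ioc_eq_integral_Ioo,
        integral_eq_lintegral_of_nonneg_ae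
          (ae_of_all _ fun x => one_div_nonneg.mpr (Real.sqrt_nonneg _))
          (((Real.continuous_sqrt.comp (by continuity)).measurable.inv.const_mul
            1).aestronglyMeasurable)]
    rw [hd, ENNReal.toReal_mul, ENNReal.toReal_ofReal (Real.rpow_nonneg ht.1.le _)]
  rw [intervalIntegral.integral_of_le (by norm_num : (0:ℝ) ≤ 1), integral_Ioc_eq_integral_Ioo,
    setIntegral_congr_fun measurableSet_Ioo hpt,
    integral_toReal hmeas.aemeasurable (ae_lt_top hmeas hfin)]

end Aux2

theorem kappa_Legendre (s : ℝ) (hs : 0 < s) :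
    s ^ 2 * (∫ t in (0:ℝ)..1, t ^ (s - 1) * deltaPeriod t) =
        π * s ^ 2 * Real.Gamma s ^ 2 / Real.Gamma (s + 1 / 2) ^ 2 ∧
      π * s ^ 2 * Real.Gamma s ^ 2 / Real.Gamma (s + 1 / 2) ^ 2 =
        (16 : ℝ) ^ s * Real.Gamma (1 + s) ^ 4 / Real.Gamma (1 + 2 * s) ^ 2 := by
  constructor
  · have hfin : (∫⁻ t in Set.Ioo (0:ℝ) 1,
        ENNReal.ofReal (t ^ (s-1)) * ∫⁻ x in Set.Ioo (0:ℝ) 1, Gker (t, x)) ≠ ⊤ := by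
      rw [claim1 hs]; exact ENNReal.ofReal_ne_top
    rw [claim2 hfin, claim1 hs, ENNReal.toReal_ofReal (sq_nonneg _), realBeta_value hs,
      div_pow, mul_pow, Real.sq_sqrt Real.pi_nonneg]
    ring
  · have hX : 0 < Real.Gamma s := Real.Gamma_pos_of_pos hs
    have hY : 0 < Real.Gamma (s + 1/2) := Real.Gamma_pos_of_pos (by linarith)
    have hZ : 0 < Real.Gamma (2*s) := Real.Gamma_pos_of_pos (by linarith)
    have hdup := Real.Gamma_mul_Gamma_add_half s
    have hs1 : Real.Gamma (1 + s) = s * Real.Gamma s := by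
      rw [add_comm, Real.Gamma_add_one hs.ne']
    have hs2 : Real.Gamma (1 + 2*s) = (2*s) * Real.Gamma (2*s) := by
      rw [add_comm, Real.Gamma_add_one (by positivity)]
    have hsq : Real.Gamma s ^ 2 * Real.Gamma (s + 1/2) ^ 2 =
        Real.Gamma (2*s) ^ 2 * (2:ℝ) ^ (2 - 4*s) * π := by
      have h1 : (Real.Gamma s * Real.Gamma (s + 1/2)) ^ 2 =
          (Real.Gamma (2*s) * (2:ℝ) ^ (1 - 2*s) * Real.sqrt π) ^ 2 := by rw [hdup]
      have h2 : ((2:ℝ) ^ ((1:ℝ) - 2*s)) ^ 2 = (2:ℝ) ^ (2 - 4*s) := by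
        rw [sq, ← Real.rpow_add two_pos]; ring_nf
      have h3 : (Real.sqrt π) ^ 2 = π := Real.sq_sqrt Real.pi_nonneg
      rw [mul_pow, mul_pow, mul_pow, h2, h3] at h1
      linarith
    have h16 : (16:ℝ) ^ s * (2:ℝ) ^ (2 - 4*s) = 4 := by
      have e1 : (16:ℝ) ^ s = (2:ℝ) ^ (4*s) := by
        rw [show (16:ℝ) = (2:ℝ) ^ (4:ℝ) by
            rw [show (4:ℝ) = ((4:ℕ):ℝ) by norm_num, Real.rpow_natCast]; norm_num,
          ← Real.rpow_mul (by norm_num : (0:ℝ) ≤ 2)]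
      rw [e1, ← Real.rpow_add two_pos, show 4*s + (2 - 4*s) = (2:ℝ) by ring,
        show (2:ℝ) = ((2:ℕ):ℝ) by norm_num, Real.rpow_natCast]
      norm_num
    rw [hs1, hs2, div_eq_div_iff (by positivity) (by positivity)]
    linear_combination (-(16:ℝ) ^ s * s^4 * Real.Gamma s ^ 2) * hsq +
      (-(s^4 * Real.Gamma s ^ 2 * Real.Gamma (2*s) ^ 2 * π)) * h16
end

section
/- For Re(s) > 0, the double integral ∫₀¹ ∫_t^1 t^{s−1} (x(1−x)(x−t))^{−1/2} dx dt equals (∫₀¹ x^{s−1}(1−x)^{−1/2} dx)², i.e., equals B(s, 1/2)² where B is the Beta function. -/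
open MeasureTheory Set intervalIntegral Real

lemma point_eq (s x t : ℝ) (hx0 : 0 < x) (hx1 : x < 1) (ht0 : 0 < t) (htx : t < x) :
    t ^ (s - 1) * (x * (1 - x) * (x - t)) ^ (-(1/2 : ℝ)) =
      x ^ (s - 1) * (1 - x) ^ (-(1/2 : ℝ)) * x⁻¹ *
        ((t * x⁻¹) ^ (s - 1) * (1 - t * x⁻¹) ^ (-(1/2 : ℝ))) := by
  have hxi : (0:ℝ) ≤ x⁻¹ := by positivity
  have h2 : (1 : ℝ) - t * x⁻¹ = (x - t) * x⁻¹ := by field_simp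
  rw [h2, Real.mul_rpow ht0.le hxi, Real.mul_rpow (by linarith : (0:ℝ) ≤ x - t) hxi,
      Real.mul_rpow (mul_nonneg hx0.le (by linarith)) (by linarith : (0:ℝ) ≤ x - t),
      Real.mul_rpow hx0.le (by linarith : (0:ℝ) ≤ 1 - x),
      Real.inv_rpow hx0.le, Real.inv_rpow hx0.le, ← Real.rpow_neg hx0.le, ← Real.rpow_neg hx0.le]
  have key : x ^ (-(1/2:ℝ)) = x ^ (s-1) * x⁻¹ * (x ^ (-(s-1)) * x ^ (-(-(1/2:ℝ)))) := by
    rw [← Real.rpow_neg_one x, ← Real.rpow_add hx0, ← Real.rpow_add hx0, ← Real.rpow_add hx0]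
    norm_num; congr 1; ring
  rw [key]; ring

lemma myCastEq (s x : ℝ) (hx0 : 0 ≤ x) (hx1 : x ≤ 1) :
    ((x ^ (s - 1) * (1 - x) ^ (-(1/2 : ℝ)) : ℝ) : ℂ) =
      (x:ℂ) ^ ((s:ℂ) - 1) * ((1:ℂ) - (x:ℂ)) ^ ((1/2:ℂ) - 1) := by
  rw [Complex.ofReal_mul, Complex.ofReal_cpow hx0, Complex.ofReal_cpow (by linarith)]
  push_cast
  norm_num

lemma beta_cast (s : ℝ) :
    ((∫ x in (0:ℝ)..1, x ^ (s - 1) * (1 - x) ^ (-(1/2 : ℝ)) : ℝ) : ℂ) =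
      Complex.betaIntegral (s : ℂ) (1 / 2) := by
  rw [Complex.betaIntegral, ← intervalIntegral.integral_ofReal]
  refine intervalIntegral.integral_congr (fun x hx => ?_)
  rw [uIcc_of_le zero_le_one] at hx
  exact myCastEq s x hx.1 hx.2

lemma hbeta (s : ℝ) (hs : 0 < s) :
    IntervalIntegrable (fun u : ℝ => u ^ (s - 1) * (1 - u) ^ (-(1/2 : ℝ))) volume 0 1 := by
  have hc := Complex.betaIntegral_convergent (u := (s:ℂ)) (v := 1/2) (by simpa using hs)
    (by norm_num)
  refine hc.mono_fun ?_ ?_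
  · refine Measurable.aestronglyMeasurable ?_
    fun_prop
  · filter_upwards [ae_restrict_mem measurableSet_uIoc] with x hx
    rw [uIoc_of_le zero_le_one] at hx
    rw [← myCastEq s x hx.1.le hx.2, Complex.norm_real]

lemma slice_lemma (s : ℝ) (hs : 0 < s) {x : ℝ} (hx0 : 0 < x) (hx1 : x < 1) :
    IntegrableOn (fun t => t ^ (s - 1) * (x * (1 - x) * (x - t)) ^ (-(1/2 : ℝ)))
      (Set.Ioo 0 x) volume ∧
    ∫ t in Set.Ioo 0 x, t ^ (s - 1) * (x * (1 - x) * (x - t)) ^ (-(1/2 : ℝ)) =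
      (x ^ (s - 1) * (1 - x) ^ (-(1/2 : ℝ))) *
        ∫ u in (0:ℝ)..1, u ^ (s - 1) * (1 - u) ^ (-(1/2 : ℝ)) := by
  have hβ := hbeta s hs
  have hcomp := hβ.comp_mul_right (c := x⁻¹)
  rw [zero_div, show (1:ℝ)/x⁻¹ = x by field_simp] at hcomp
  set c := x ^ (s - 1) * (1 - x) ^ (-(1/2 : ℝ)) * x⁻¹ with hc
  have hconst : IntervalIntegrable
      (fun t => c * ((t * x⁻¹) ^ (s - 1) * (1 - t * x⁻¹) ^ (-(1/2 : ℝ)))) volume 0 x :=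
    hcomp.const_mul c
  have heq : Set.EqOn (fun t => c * ((t * x⁻¹) ^ (s - 1) * (1 - t * x⁻¹) ^ (-(1/2 : ℝ))))
      (fun t => t ^ (s - 1) * (x * (1 - x) * (x - t)) ^ (-(1/2 : ℝ))) (Set.Ioo 0 x) := by
    intro t ht
    exact (point_eq s x t hx0 hx1 ht.1 ht.2).symm
  constructor
  · exact ((hconst.1.mono_set Set.Ioo_subset_Ioc_self).congr_fun heq measurableSet_Ioo)
  · rw [setIntegral_congr_fun measurableSet_Ioo heq.symm, ← integral_Ioc_eq_integral_Ioo,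
      ← intervalIntegral.integral_of_le hx0.le, intervalIntegral.integral_const_mul,
      intervalIntegral.integral_comp_mul_right (fun u => u ^ (s - 1) * (1 - u) ^ (-(1/2:ℝ))) (inv_ne_zero hx0.ne')]
    rw [zero_mul, mul_inv_cancel₀ hx0.ne', inv_inv, smul_eq_mul, hc]
    field_simp

theorem double_integral_beta (s : ℝ) (hs : 0 < s) :
    (∫ t in (0:ℝ)..1, t ^ (s - 1) * ∫ x in t..1, (x * (1 - x) * (x - t)) ^ (-(1/2 : ℝ))) =
        (∫ x in (0:ℝ)..1, x ^ (s - 1) * (1 - x) ^ (-(1/2 : ℝ))) ^ 2 ∧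
      ((∫ x in (0:ℝ)..1, x ^ (s - 1) * (1 - x) ^ (-(1/2 : ℝ)) : ℝ) : ℂ) =
        Complex.betaIntegral (s : ℂ) (1 / 2) := by
  refine ⟨?_, beta_cast s⟩
  set B := ∫ x in (0:ℝ)..1, x ^ (s - 1) * (1 - x) ^ (-(1/2 : ℝ)) with hB
  have hβ := hbeta s hs
  set μ : Measure ℝ := volume.restrict (Set.Ioo 0 1) with hμ
  set F : ℝ × ℝ → ℝ := fun p =>
    Set.indicator {q : ℝ × ℝ | q.1 < q.2}
      (fun q => q.1 ^ (s - 1) * (q.2 * (1 - q.2) * (q.2 - q.1)) ^ (-(1/2 : ℝ))) p with hF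
  have hFmeas : Measurable F := by
    apply Measurable.indicator
    · fun_prop
    · exact measurableSet_lt measurable_fst measurable_snd
  have hrepr_t : ∀ x : ℝ, (fun t => F (t, x)) =
      Set.indicator (Set.Iio x)
        (fun t => t ^ (s - 1) * (x * (1 - x) * (x - t)) ^ (-(1/2 : ℝ))) := by
    intro x; funext t
    by_cases h : t < x <;> simp [hF, Set.indicator_apply, h]
  have hrepr_x : ∀ t : ℝ, (fun x => F (t, x)) =
      Set.indicator (Set.Ioi t)
        (fun x => t ^ (s - 1) * (x * (1 - x) * (x - t)) ^ (-(1/2 : ℝ))) := by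
    intro t; funext x
    by_cases h : t < x <;> simp [hF, Set.indicator_apply, h, Set.mem_Ioi]
  have hset_t : ∀ x ∈ Set.Ioo (0:ℝ) 1, Set.Iio x ∩ Set.Ioo (0:ℝ) 1 = Set.Ioo 0 x := by
    intro x hx; ext t
    simp only [Set.mem_inter_iff, Set.mem_Iio, Set.mem_Ioo]
    exact ⟨fun ⟨h1, h2, _⟩ => ⟨h2, h1⟩, fun ⟨h1, h2⟩ => ⟨h2, h1, h2.trans hx.2⟩⟩
  have hset_x : ∀ t ∈ Set.Ioo (0:ℝ) 1, Set.Ioi t ∩ Set.Ioo (0:ℝ) 1 = Set.Ioo t 1 := by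
    intro t ht; ext x
    simp only [Set.mem_inter_iff, Set.mem_Ioi, Set.mem_Ioo]
    exact ⟨fun ⟨h1, _, h3⟩ => ⟨h1, h3⟩, fun ⟨h1, h2⟩ => ⟨h1, ht.1.trans h1, h2⟩⟩
  have hinner_t : ∀ x ∈ Set.Ioo (0:ℝ) 1, ∫ t, F (t, x) ∂μ =
      (x ^ (s - 1) * (1 - x) ^ (-(1/2 : ℝ))) * B := by
    intro x hx
    rw [hrepr_t x, hμ, MeasureTheory.integral_indicator measurableSet_Iio,
      Measure.restrict_restrict measurableSet_Iio, hset_t x hx]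
    exact (slice_lemma s hs hx.1 hx.2).2
  have hint_t : ∀ x ∈ Set.Ioo (0:ℝ) 1, Integrable (fun t => F (t, x)) μ := by
    intro x hx
    rw [hrepr_t x, hμ, integrable_indicator_iff measurableSet_Iio, IntegrableOn,
      Measure.restrict_restrict measurableSet_Iio, hset_t x hx]
    exact (slice_lemma s hs hx.1 hx.2).1
  have hFnn : ∀ p : ℝ × ℝ, 0 ≤ p.1 → 0 ≤ p.2 → p.2 ≤ 1 → 0 ≤ F p := by
    intro p h1 h2 h3
    rw [hF]
    refine Set.indicator_apply_nonneg fun hp => ?_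
    have hp' : p.1 < p.2 := hp
    exact mul_nonneg (Real.rpow_nonneg h1 _)
      (Real.rpow_nonneg (mul_nonneg (mul_nonneg h2 (by linarith)) (by linarith)) _)
  have hβIoo : IntegrableOn (fun x : ℝ => x ^ (s - 1) * (1 - x) ^ (-(1/2 : ℝ)))
      (Set.Ioo 0 1) volume := (hβ.1).mono_set Set.Ioo_subset_Ioc_self
  have hF2fun : (fun x => ∫ t, ‖F (t, x)‖ ∂μ) =ᵐ[μ]
      fun x => (x ^ (s - 1) * (1 - x) ^ (-(1/2 : ℝ))) * B := by
    filter_upwards [ae_restrict_mem measurableSet_Ioo] with x hx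
    rw [← hinner_t x hx]
    refine integral_congr_ae ?_
    filter_upwards [ae_restrict_mem measurableSet_Ioo] with t ht
    exact abs_of_nonneg (hFnn (t, x) ht.1.le hx.1.le hx.2.le)
  have hF2 : Integrable (fun x => ∫ t, ‖F (t, x)‖ ∂μ) μ :=
    (hβIoo.mul_const B).congr hF2fun.symm
  have hFint : Integrable F (μ.prod μ) := by
    refine (integrable_prod_iff' hFmeas.aestronglyMeasurable).2 ⟨?_, hF2⟩
    filter_upwards [ae_restrict_mem measurableSet_Ioo] with x hx
    exact hint_t x hx
  have hL : (∫ t in (0:ℝ)..1, t ^ (s - 1) * ∫ x in t..1, (x * (1 - x) * (x - t)) ^ (-(1/2 : ℝ)))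
      = ∫ t, (∫ x, F (t, x) ∂μ) ∂μ := by
    rw [hμ, intervalIntegral.integral_of_le zero_le_one, integral_Ioc_eq_integral_Ioo]
    refine setIntegral_congr_fun measurableSet_Ioo (fun t ht => ?_)
    have hxint : ∫ x, F (t, x) ∂(volume.restrict (Set.Ioo 0 1)) =
        ∫ x in Set.Ioo t 1, t ^ (s - 1) * (x * (1 - x) * (x - t)) ^ (-(1/2 : ℝ)) := by
      rw [hrepr_x t, MeasureTheory.integral_indicator measurableSet_Ioi,
        Measure.restrict_restrict measurableSet_Ioi, hset_x t ht]
    rw [hxint, MeasureTheory.integral_const_mul,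
      intervalIntegral.integral_of_le ht.2.le, integral_Ioc_eq_integral_Ioo]
  have hswap : ∫ t, (∫ x, F (t, x) ∂μ) ∂μ = ∫ x, (∫ t, F (t, x) ∂μ) ∂μ :=
    integral_integral_swap hFint
  have hR : ∫ x, (∫ t, F (t, x) ∂μ) ∂μ = B * B := by
    rw [hμ]
    rw [setIntegral_congr_fun measurableSet_Ioo
      (fun x hx => hinner_t x hx)]
    rw [MeasureTheory.integral_mul_const, ← integral_Ioc_eq_integral_Ioo,
      ← intervalIntegral.integral_of_le zero_le_one]
  rw [hL, hswap, hR, sq]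
end

section
/- The function κ_G(s) = 16^{-s/2} κ(s/2), where κ(s) = 16^s Γ(1+s)⁴/Γ(1+2s)², equals exp(2 Σ_{k≥2} (ζ(k)/k)(2^{1−k} − 1)(−s)^k), and its Taylor expansion at 0 begins 1 − (π²/12)s² + (ζ(3)/2)s³ − (π⁴/720)s⁴ + (3ζ(5)/8 − π²ζ(3)/24)s⁵ + ···. -/
open Real

/-- `κ(s) = 16^s Γ(1+s)⁴ / Γ(1+2s)²`. -/
noncomputable def kappaFun (s : ℝ) : ℝ :=
  (16 : ℝ) ^ s * Real.Gamma (1 + s) ^ 4 / Real.Gamma (1 + 2 * s) ^ 2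

/-- The Frobenius generating function of case G: `κ_G(s) = 16^{-s/2} κ(s/2)`. -/
noncomputable def kappaG (s : ℝ) : ℝ := (16 : ℝ) ^ (-s / 2) * kappaFun (s / 2)

/-- The value `ζ(k) = ∑_{n ≥ 1} n^{-k}` of the Riemann zeta function at a positive integer. -/
noncomputable def zetaVal (k : ℕ) : ℝ := ∑' n : ℕ, 1 / ((n : ℝ) + 1) ^ k

open Topology

lemma hasSum_zetaVal_two : HasSum (fun n : ℕ => 1 / ((n : ℝ) + 1) ^ 2) (π ^ 2 / 6) := by
  have h := (hasSum_nat_add_iff' (f := fun n : ℕ => 1 / (n : ℝ) ^ 2) 1).2 hasSum_zeta_two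
  simp only [Finset.range_one, Finset.sum_singleton, Nat.cast_zero] at h
  norm_num at h
  exact h.congr_fun fun n => by simp [one_div]

lemma hasSum_zetaVal_four : HasSum (fun n : ℕ => 1 / ((n : ℝ) + 1) ^ 4) (π ^ 4 / 90) := by
  have h := (hasSum_nat_add_iff' (f := fun n : ℕ => 1 / (n : ℝ) ^ 4) 1).2 hasSum_zeta_four
  simp only [Finset.range_one, Finset.sum_singleton, Nat.cast_zero] at h
  norm_num at h
  exact h.congr_fun fun n => by simp [one_div]

lemma zetaVal_two : zetaVal 2 = π ^ 2 / 6 := hasSum_zetaVal_two.tsum_eq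

lemma zetaVal_four : zetaVal 4 = π ^ 4 / 90 := hasSum_zetaVal_four.tsum_eq

lemma summable_zetaVal {k : ℕ} (hk : 2 ≤ k) :
    Summable (fun n : ℕ => 1 / ((n : ℝ) + 1) ^ k) := by
  refine Summable.of_nonneg_of_le (fun n => by positivity) (fun n => ?_) hasSum_zetaVal_two.summable
  have h1 : (1 : ℝ) ≤ (n : ℝ) + 1 := by linarith [n.cast_nonneg (α := ℝ)]
  exact one_div_le_one_div_of_le (by positivity) (pow_le_pow_right₀ h1 hk)

lemma zetaVal_nonneg (k : ℕ) : 0 ≤ zetaVal k :=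
  tsum_nonneg fun n => by positivity

lemma zetaVal_le_two {k : ℕ} (hk : 2 ≤ k) : zetaVal k ≤ 2 := by
  have h1 : zetaVal k ≤ zetaVal 2 := by
    refine Summable.tsum_le_tsum (fun n => ?_) (summable_zetaVal hk) hasSum_zetaVal_two.summable
    have h1 : (1 : ℝ) ≤ (n : ℝ) + 1 := by linarith [n.cast_nonneg (α := ℝ)]
    exact one_div_le_one_div_of_le (by positivity) (pow_le_pow_right₀ h1 hk)
  rw [zetaVal_two] at h1
  nlinarith [Real.pi_lt_d2, Real.pi_pos]

lemma kappaG_eq (s : ℝ) :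
    kappaG s = Real.Gamma (1 + s / 2) ^ 4 / Real.Gamma (1 + s) ^ 2 := by
  have h16 : (16 : ℝ) ^ (-s / 2) * (16 : ℝ) ^ (s / 2) = 1 := by
    rw [← Real.rpow_add (by norm_num), show -s / 2 + s / 2 = 0 by ring, Real.rpow_zero]
  have h2 : 2 * (s / 2) = s := by ring
  rw [kappaG, kappaFun, h2, mul_div_assoc, ← mul_assoc, h16, one_mul]

lemma kappaG_pos {s : ℝ} (hs : -1 < s) : 0 < kappaG s := by
  rw [kappaG_eq]
  have h1 : 0 < Real.Gamma (1 + s / 2) := Real.Gamma_pos_of_pos (by linarith)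
  have h2 : 0 < Real.Gamma (1 + s) := Real.Gamma_pos_of_pos (by linarith)
  positivity

noncomputable def acoef (m : ℕ) : ℝ :=
  if m < 2 then 0 else 2 * (zetaVal m / m * ((2:ℝ) ^ ((1:ℝ) - (m:ℝ)) - 1) * (-1:ℝ) ^ m)

noncomputable def ccoef (m : ℕ) : ℝ :=
  2 * ((2:ℝ) / 2 ^ (m+2) - 1) * (-1:ℝ) ^ m / ((m:ℝ) + 2)

lemma rpow_one_sub_natCast (m : ℕ) : (2:ℝ) ^ ((1:ℝ) - ((m:ℕ):ℝ)) = 2 / 2 ^ m := by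
  rw [Real.rpow_sub (by norm_num), Real.rpow_one, Real.rpow_natCast]

lemma acoef_add_two (m : ℕ) : acoef (m+2) = zetaVal (m+2) * ccoef m := by
  rw [acoef, if_neg (by omega), ccoef]
  have h1 : ((m+2:ℕ):ℝ) = (m:ℝ) + 2 := by push_cast; ring
  rw [show ((1:ℝ) - ((m+2:ℕ):ℝ)) = (1:ℝ) - (((m+2:ℕ)):ℝ) from rfl,
    rpow_one_sub_natCast (m+2), h1, pow_add]
  ring

lemma abs_ccoef_le (m : ℕ) : |ccoef m| ≤ 1 := by
  have h2 : (4:ℝ) ≤ 2 ^ (m+2) := by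
    calc (4:ℝ) = 2^2 := by norm_num
    _ ≤ 2^(m+2) := pow_le_pow_right₀ one_le_two (by omega)
  have hpos : (0:ℝ) < 2 ^ (m+2) := by positivity
  have ht0 : (0:ℝ) < 2 / 2^(m+2) := by positivity
  have ht1 : (2:ℝ) / 2^(m+2) ≤ 1/2 := by
    rw [div_le_div_iff₀ hpos (by norm_num)]; linarith
  rw [ccoef, abs_div]
  rw [div_le_one (by rw [abs_of_nonneg (by positivity)]; positivity)]
  rw [abs_mul, abs_pow, abs_neg, abs_one, one_pow, mul_one, abs_mul, abs_two]
  rw [abs_of_nonneg (show (0:ℝ) ≤ (m:ℝ)+2 by positivity)]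
  have h3 : |(2:ℝ)/2^(m+2) - 1| ≤ 1 := by rw [abs_le]; constructor <;> linarith
  nlinarith [m.cast_nonneg (α := ℝ)]

lemma acoef_zero : acoef 0 = 0 := by rw [acoef, if_pos (by omega)]
lemma acoef_one : acoef 1 = 0 := by rw [acoef, if_pos (by omega)]

lemma abs_acoef_le (m : ℕ) : |acoef m| ≤ 2 := by
  rcases lt_or_ge m 2 with h | h
  · rw [acoef, if_pos h]; norm_num
  · obtain ⟨k, rfl⟩ : ∃ k, m = k + 2 := ⟨m - 2, by omega⟩
    rw [acoef_add_two, abs_mul]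
    have h1 := zetaVal_nonneg (k+2)
    have h2 := zetaVal_le_two (le_add_self : 2 ≤ k + 2)
    have h3 := abs_ccoef_le k
    have h4 := abs_nonneg (ccoef k)
    rw [abs_of_nonneg h1]
    nlinarith

lemma abs_div_succ_lt_one {s : ℝ} (hs : |s| < 1) (j : ℕ) : |s / ((j:ℝ)+1)| < 1 := by
  have hj : (1:ℝ) ≤ (j:ℝ) + 1 := by linarith [j.cast_nonneg (α := ℝ)]
  rw [abs_div, abs_of_nonneg (by linarith : (0:ℝ) ≤ (j:ℝ)+1)]
  rw [div_lt_one (by linarith)]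
  linarith

lemma hasSum_W {s : ℝ} (hs : |s| < 1) (j : ℕ) :
    HasSum (fun m : ℕ => ccoef m * (s/((j:ℝ)+1))^(m+2))
      (2 * Real.log (1 + s/((j:ℝ)+1)) - 4 * Real.log (1 + s/(2*((j:ℝ)+1)))) := by
  set x : ℝ := s / ((j:ℝ)+1) with hx
  have hxlt : |x| < 1 := abs_div_succ_lt_one hs j
  have h1 : HasSum (fun n : ℕ => -2 * ((-x)^(n+1)/((n:ℝ)+1))) (-2 * (-Real.log (1 + x))) := by
    have h := Real.hasSum_pow_div_log_of_abs_lt_one (x := -x) (by rwa [abs_neg])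
    rw [sub_neg_eq_add] at h
    exact h.mul_left _
  have h2 : HasSum (fun n : ℕ => 4 * ((-(x/2))^(n+1)/((n:ℝ)+1))) (4 * (-Real.log (1 + x/2))) := by
    have hxlt2 : |(-(x/2))| < 1 := by
      rw [abs_neg, abs_div, abs_two]
      calc |x| / 2 ≤ |x| := by linarith [abs_nonneg x]
      _ < 1 := hxlt
    have h := Real.hasSum_pow_div_log_of_abs_lt_one (x := -(x/2)) hxlt2
    rw [sub_neg_eq_add] at h
    exact h.mul_left _
  have h3 := h1.add h2
  set t : ℕ → ℝ := fun n =>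
    -2 * ((-x)^(n+1)/((n:ℝ)+1)) + 4 * ((-(x/2))^(n+1)/((n:ℝ)+1)) with ht
  have h4 : HasSum (fun n : ℕ => t (n+1))
      ((-2 * (-Real.log (1 + x)) + 4 * (-Real.log (1 + x/2))) - ∑ i ∈ Finset.range 1, t i) :=
    (hasSum_nat_add_iff' 1).2 h3
  have ht0 : ∑ i ∈ Finset.range 1, t i = 0 := by
    rw [Finset.range_one, Finset.sum_singleton, ht]
    push_cast
    ring
  rw [ht0, sub_zero] at h4
  have hj0 : ((j:ℝ)+1) ≠ 0 := by positivity
  have harg : 1 + s/(2*((j:ℝ)+1)) = 1 + x/2 := by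
    rw [hx]
    field_simp
  have hval : (-2 * (-Real.log (1 + x)) + 4 * (-Real.log (1 + x/2)))
      = 2 * Real.log (1 + s/((j:ℝ)+1)) - 4 * Real.log (1 + s/(2*((j:ℝ)+1))) := by
    rw [harg, ← hx]; ring
  rw [hval] at h4
  refine h4.congr_fun fun m => ?_
  have hm2 : (0:ℝ) < (m:ℝ) + 2 := by positivity
  have hp2 : (0:ℝ) < (2:ℝ)^(m+2) := by positivity
  have hnx : (-x)^(m+2) = (-1:ℝ)^m * x^(m+2) := by rw [neg_pow, pow_add]; ring
  have hnx2 : (-(x/2))^(m+2) = (-1:ℝ)^m * x^(m+2) / 2^(m+2) := by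
    rw [neg_pow, pow_add, div_pow]; ring
  rw [ht]
  push_cast
  rw [hnx, hnx2, ccoef]
  field_simp
  ring

open Topology

lemma summable_W_prod {s : ℝ} (hs : |s| < 1) :
    Summable (Function.uncurry (fun j m : ℕ => ccoef m * (s/((j:ℝ)+1))^(m+2))) := by
  have hf : Summable (fun j : ℕ => 2 / ((j:ℝ)+1)^2) := by
    refine (hasSum_zetaVal_two.summable.mul_left 2).congr fun j => ?_
    rw [mul_one_div]
  have hg : Summable (fun m : ℕ => |s|^m) := summable_geometric_of_lt_one (abs_nonneg s) hs
  refine Summable.of_norm_bounded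
    (hf.mul_of_nonneg hg (fun j => by positivity) (fun m => by positivity)) ?_
  rintro ⟨j, m⟩
  simp only [Function.uncurry, Real.norm_eq_abs, abs_mul, abs_pow, abs_div]
  rw [abs_of_nonneg (show (0:ℝ) ≤ (j:ℝ)+1 by positivity)]
  have hj1 : (1:ℝ) ≤ (j:ℝ)+1 := by linarith [j.cast_nonneg (α := ℝ)]
  have h1 : |ccoef m| ≤ 1 := abs_ccoef_le m
  have h2 : (|s|/((j:ℝ)+1))^(m+2) ≤ |s|^m / ((j:ℝ)+1)^2 := by
    rw [div_pow]
    have hnum : |s|^(m+2) ≤ |s|^m := by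
      calc |s|^(m+2) = |s|^m * |s|^2 := by rw [pow_add]
      _ ≤ |s|^m * 1 := mul_le_mul_of_nonneg_left (by nlinarith [abs_nonneg s])
          (pow_nonneg (abs_nonneg s) m)
      _ = |s|^m := mul_one _
    have hden : ((j:ℝ)+1)^2 ≤ ((j:ℝ)+1)^(m+2) := pow_le_pow_right₀ hj1 (by omega)
    exact div_le_div₀ (pow_nonneg (abs_nonneg s) m) hnum (by positivity) hden
  calc |ccoef m| * (|s|/((j:ℝ)+1))^(m+2) ≤ 1 * (|s|^m / ((j:ℝ)+1)^2) :=
        mul_le_mul h1 h2 (by positivity) one_pos.le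
  _ ≤ 2/((j:ℝ)+1)^2 * |s|^m := by
      rw [one_mul, div_mul_eq_mul_div, mul_comm]
      gcongr
      nlinarith [pow_nonneg (abs_nonneg s) m]

lemma gammaSeq_pos {z : ℝ} (hz : 0 < z) {n : ℕ} (hn : 1 ≤ n) : 0 < Real.GammaSeq z n := by
  rw [Real.GammaSeq]
  have hnpos : (0:ℝ) < n := by exact_mod_cast hn
  have hprod : 0 < ∏ j ∈ Finset.range (n+1), (z + (j:ℝ)) :=
    Finset.prod_pos fun j _ => by positivity
  have hfac : (0:ℝ) < (n.factorial : ℝ) := by exact_mod_cast n.factorial_pos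
  exact div_pos (mul_pos (Real.rpow_pos_of_pos hnpos z) hfac) hprod

lemma log_gammaSeq {z : ℝ} (hz : 0 < z) {n : ℕ} (hn : 1 ≤ n) :
    Real.log (Real.GammaSeq z n) = z * Real.log n + Real.log (n.factorial : ℝ) -
      ∑ j ∈ Finset.range (n+1), Real.log (z + j) := by
  have hnpos : (0:ℝ) < n := by exact_mod_cast hn
  have hfac : (0:ℝ) < (n.factorial : ℝ) := by exact_mod_cast n.factorial_pos
  have hterm : ∀ j ∈ Finset.range (n+1), z + (j:ℝ) ≠ 0 := fun j _ => by positivity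
  have hprod : ∏ j ∈ Finset.range (n+1), (z + (j:ℝ)) ≠ 0 := Finset.prod_ne_zero_iff.2 hterm
  rw [Real.GammaSeq, Real.log_div (by positivity) hprod,
    Real.log_mul (Real.rpow_pos_of_pos hnpos z).ne' hfac.ne',
    Real.log_rpow hnpos, Real.log_prod hterm]

lemma sum_log_succ (n : ℕ) :
    ∑ j ∈ Finset.range n, Real.log ((j:ℝ)+1) = Real.log (n.factorial : ℝ) := by
  induction n with
  | zero => simp
  | succ k ih =>
    rw [Finset.sum_range_succ, ih, Nat.factorial_succ, Nat.cast_mul,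
      Real.log_mul (Nat.cast_ne_zero.2 (Nat.succ_ne_zero k))
        (Nat.cast_ne_zero.2 k.factorial_pos.ne')]
    push_cast
    ring

lemma hasSum_log_kappaG {s : ℝ} (hs : |s| < 1) :
    HasSum (fun m : ℕ => acoef (m+2) * s^(m+2)) (Real.log (kappaG s)) := by
  obtain ⟨hs1, hs2⟩ := abs_lt.1 hs
  set W : ℕ → ℕ → ℝ := fun j m => ccoef m * (s/((j:ℝ)+1))^(m+2) with hWdef
  set G : ℕ → ℝ := fun j =>
    2 * Real.log (1 + s/((j:ℝ)+1)) - 4 * Real.log (1 + s/(2*((j:ℝ)+1))) with hGdef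
  have hA1 : ∀ j, HasSum (W j) (G j) := fun j => hasSum_W hs j
  have hWsum : Summable (Function.uncurry W) := summable_W_prod hs
  have hGsum : Summable G := (hWsum.prod).congr fun j => (hA1 j).tsum_eq
  have hpos2 : 0 < 1 + s := by linarith
  have hpos1 : 0 < 1 + s/2 := by linarith
  have hkpos : 0 < kappaG s := kappaG_pos (by linarith)
  have hGamma2 : Real.Gamma (1 + s) ≠ 0 := (Real.Gamma_pos_of_pos hpos2).ne'
  have hR : Filter.Tendsto
      (fun n => (Real.GammaSeq (1+s/2) n)^4 / (Real.GammaSeq (1+s) n)^2)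
      Filter.atTop (𝓝 (kappaG s)) := by
    rw [kappaG_eq]
    exact ((Real.GammaSeq_tendsto_Gamma (1+s/2)).pow 4).div
      ((Real.GammaSeq_tendsto_Gamma (1+s)).pow 2) (pow_ne_zero 2 hGamma2)
  have hlogR : Filter.Tendsto
      (fun n => Real.log ((Real.GammaSeq (1+s/2) n)^4 / (Real.GammaSeq (1+s) n)^2))
      Filter.atTop (𝓝 (Real.log (kappaG s))) :=
    ((Real.continuousAt_log hkpos.ne').tendsto).comp hR
  have hid : ∀ n : ℕ, 1 ≤ n →
      Real.log ((Real.GammaSeq (1+s/2) n)^4 / (Real.GammaSeq (1+s) n)^2)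
        = (∑ j ∈ Finset.range (n+1), G j)
          + (2 * Real.log n - 2 * Real.log ((n:ℝ)+1)) := by
    intro n hn
    have hGS1 : 0 < Real.GammaSeq (1+s/2) n := gammaSeq_pos hpos1 hn
    have hGS2 : 0 < Real.GammaSeq (1+s) n := gammaSeq_pos hpos2 hn
    have hsplit : ∀ j ∈ Finset.range (n+1), G j =
        (2*Real.log ((1+s) + (j:ℝ)) - 4*Real.log ((1+s/2) + (j:ℝ)))
          + 2*Real.log ((j:ℝ)+1) := by
      intro j _
      have hj0 : (0:ℝ) < (j:ℝ)+1 := by positivity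
      have hjn : (0:ℝ) ≤ (j:ℝ) := j.cast_nonneg
      have hp1 : (0:ℝ) < (1+s) + (j:ℝ) := by linarith
      have hp2 : (0:ℝ) < (1+s/2) + (j:ℝ) := by linarith
      have e1 : 1 + s/((j:ℝ)+1) = ((1+s)+(j:ℝ))/((j:ℝ)+1) := by field_simp; ring
      have e2 : 1 + s/(2*((j:ℝ)+1)) = ((1+s/2)+(j:ℝ))/((j:ℝ)+1) := by
        field_simp; ring
      simp only [hGdef]
      rw [e1, e2, Real.log_div hp1.ne' hj0.ne', Real.log_div hp2.ne' hj0.ne']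
      ring
    have hlf : ∑ j ∈ Finset.range (n+1), Real.log ((j:ℝ)+1)
        = Real.log (n.factorial : ℝ) + Real.log ((n:ℝ)+1) := by
      rw [Finset.sum_range_succ, sum_log_succ]
    rw [Real.log_div (by positivity) (by positivity), Real.log_pow, Real.log_pow,
      log_gammaSeq hpos1 hn, log_gammaSeq hpos2 hn,
      Finset.sum_congr rfl hsplit, Finset.sum_add_distrib, Finset.sum_sub_distrib,
      ← Finset.mul_sum, ← Finset.mul_sum, ← Finset.mul_sum, hlf]
    ring
  have hclim : Filter.Tendsto (fun n : ℕ => 2*Real.log n - 2*Real.log ((n:ℝ)+1))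
      Filter.atTop (𝓝 0) := by
    have h1 : Filter.Tendsto (fun n : ℕ => 1 + 1/(n:ℝ)) Filter.atTop (𝓝 1) := by
      have h2 := (tendsto_one_div_atTop_nhds_zero_nat).const_add (1:ℝ)
      simpa using h2
    have h2 : Filter.Tendsto (fun n : ℕ => Real.log (1 + 1/(n:ℝ))) Filter.atTop (𝓝 0) := by
      have := (Real.continuousAt_log one_ne_zero).tendsto.comp h1
      simpa [Real.log_one, Function.comp_def] using this
    have h3 := h2.const_mul (-2)
    rw [mul_zero] at h3
    refine Filter.Tendsto.congr' ?_ h3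
    filter_upwards [Filter.eventually_ge_atTop 1] with n hn
    have hnpos : (0:ℝ) < n := by exact_mod_cast hn
    have he : 1 + 1/(n:ℝ) = ((n:ℝ)+1)/n := by field_simp
    rw [he, Real.log_div (by positivity) hnpos.ne']
    ring
  have hPS : Filter.Tendsto (fun n : ℕ => ∑ j ∈ Finset.range (n+1), G j)
      Filter.atTop (𝓝 (Real.log (kappaG s))) := by
    have heq : (fun n : ℕ => ∑ j ∈ Finset.range (n+1), G j)
        =ᶠ[Filter.atTop] fun n =>
          Real.log ((Real.GammaSeq (1+s/2) n)^4 / (Real.GammaSeq (1+s) n)^2)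
            - (2*Real.log n - 2*Real.log ((n:ℝ)+1)) := by
      filter_upwards [Filter.eventually_ge_atTop 1] with n hn
      rw [hid n hn]; ring
    have h6 := hlogR.sub hclim
    rw [sub_zero] at h6
    exact Filter.Tendsto.congr' heq.symm h6
  have htsum : ∑' j, G j = Real.log (kappaG s) := by
    have h5 := hGsum.hasSum.tendsto_sum_nat.comp (Filter.tendsto_add_atTop_nat 1)
    exact tendsto_nhds_unique h5 hPS
  have hswap : ∑' j, G j = ∑' m, (acoef (m+2) * s^(m+2)) := by
    calc ∑' j, G j = ∑' j, ∑' m, W j m := tsum_congr fun j => (hA1 j).tsum_eq.symm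
    _ = ∑' m, ∑' j, W j m := (Summable.tsum_comm hWsum).symm
    _ = ∑' m, (acoef (m+2) * s^(m+2)) := by
      refine tsum_congr fun m => ?_
      have hWj : ∀ j : ℕ, W j m = (ccoef m * s^(m+2)) * (1/((j:ℝ)+1)^(m+2)) := by
        intro j
        simp only [hWdef]
        rw [div_pow]
        ring
      rw [tsum_congr hWj, tsum_mul_left,
        show (∑' j:ℕ, 1/((j:ℝ)+1)^(m+2)) = zetaVal (m+2) from rfl, acoef_add_two]
      ring
  have hsumfinal : Summable (fun m : ℕ => acoef (m+2) * s^(m+2)) := by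
    refine Summable.of_norm_bounded
      ((summable_geometric_of_lt_one (abs_nonneg s) hs).mul_left 2) fun m => ?_
    rw [Real.norm_eq_abs, abs_mul, abs_pow]
    have h1 := abs_acoef_le (m+2)
    have h2 : |s|^(m+2) ≤ |s|^m := by
      calc |s|^(m+2) = |s|^m * |s|^2 := by rw [pow_add]
      _ ≤ |s|^m * 1 := mul_le_mul_of_nonneg_left (by nlinarith [abs_nonneg s])
          (pow_nonneg (abs_nonneg s) m)
      _ = |s|^m := mul_one _
    calc |acoef (m+2)| * |s|^(m+2) ≤ 2 * |s|^(m+2) :=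
          mul_le_mul_of_nonneg_right h1 (pow_nonneg (abs_nonneg s) _)
    _ ≤ 2 * |s|^m := mul_le_mul_of_nonneg_left h2 (by norm_num)
  have hfinal := hsumfinal.hasSum
  rwa [← hswap, htsum] at hfinal

lemma kappaG_eq_exp {s : ℝ} (hs : |s| < 1) :
    kappaG s = Real.exp (2 * ∑' k : ℕ,
      zetaVal (k + 2) / (k + 2) * ((2 : ℝ) ^ (1 - ((k : ℝ) + 2)) - 1) * (-s) ^ (k + 2)) := by
  have h := hasSum_log_kappaG hs
  have hterm : ∀ m : ℕ, acoef (m+2) * s^(m+2)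
      = 2 * (zetaVal (m + 2) / ((m:ℝ) + 2) * ((2 : ℝ) ^ (1 - ((m : ℝ) + 2)) - 1)
          * (-s) ^ (m + 2)) := by
    intro m
    rw [acoef, if_neg (by omega)]
    have hc : ((m+2:ℕ):ℝ) = (m:ℝ)+2 := by push_cast; ring
    rw [hc, neg_pow s (m+2)]
    ring
  have h3 : (2:ℝ) * ∑' k : ℕ, zetaVal (k + 2) / ((k:ℝ) + 2)
      * ((2 : ℝ) ^ (1 - ((k : ℝ) + 2)) - 1) * (-s) ^ (k + 2) = Real.log (kappaG s) := by
    rw [← h.tsum_eq, ← tsum_mul_left]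
    exact tsum_congr fun m => (hterm m).symm
  rw [h3, Real.exp_log (kappaG_pos (by linarith [(abs_lt.1 hs).1]))]

noncomputable def bcoef (j m : ℕ) : ℝ := ((m+j).descFactorial j : ℝ) * acoef (m+j)

noncomputable def gser (j : ℕ) (s : ℝ) : ℝ := ∑' m : ℕ, bcoef j m * s ^ m

lemma bcoef_zero (m : ℕ) : bcoef 0 m = acoef m := by
  rw [bcoef, Nat.add_zero, Nat.descFactorial_zero, Nat.cast_one, one_mul]

lemma abs_bcoef_le (j m : ℕ) : |bcoef j m| ≤ 2 * (((m:ℝ)+1) * ((j:ℝ)+1))^j := by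
  have hd : (((m+j).descFactorial j : ℕ) : ℝ) ≤ (((m:ℝ)+1) * ((j:ℝ)+1))^j := by
    have h1 : (m+j).descFactorial j ≤ (m+j)^j := Nat.descFactorial_le_pow _ _
    have h2 : (m+j)^j ≤ ((m+1)*(j+1))^j := Nat.pow_le_pow_left (by nlinarith) j
    calc (((m+j).descFactorial j : ℕ) : ℝ) ≤ (((m+j)^j : ℕ) : ℝ) := by exact_mod_cast h1
    _ ≤ ((((m+1)*(j+1))^j : ℕ) : ℝ) := by exact_mod_cast h2
    _ = (((m:ℝ)+1) * ((j:ℝ)+1))^j := by push_cast; ring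
  calc |bcoef j m| = (((m+j).descFactorial j : ℕ) : ℝ) * |acoef (m+j)| := by
        rw [bcoef, abs_mul, Nat.abs_cast]
  _ ≤ (((m:ℝ)+1) * ((j:ℝ)+1))^j * 2 :=
      mul_le_mul hd (abs_acoef_le _) (abs_nonneg _) (by positivity)
  _ = 2 * (((m:ℝ)+1) * ((j:ℝ)+1))^j := by ring

lemma summable_aux (k : ℕ) : Summable (fun m : ℕ => ((m:ℝ)+1)^k * (2:ℝ)⁻¹ ^ m) := by
  have h := summable_pow_mul_geometric_of_norm_lt_one (R := ℝ) k
    (r := (2:ℝ)⁻¹) (by rw [Real.norm_eq_abs, abs_of_nonneg (by norm_num)]; norm_num)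
  have h2 := ((summable_nat_add_iff 1).2 h).mul_left 2
  refine h2.congr fun m => ?_
  push_cast
  ring

lemma half_pow_pred (m : ℕ) : ((2:ℝ)⁻¹)^(m-1) ≤ 2 * (2:ℝ)⁻¹^m := by
  cases m with
  | zero => norm_num
  | succ k =>
    rw [Nat.add_sub_cancel, pow_succ]
    apply le_of_eq
    ring

lemma gser_hasDerivAt (j : ℕ) {s : ℝ} (hs : s ∈ Metric.ball (0:ℝ) 2⁻¹) :
    HasDerivAt (gser j) (gser (j+1) s) s := by
  set u : ℕ → ℝ := fun m => 8 * ((j:ℝ)+1)^(j+1) * (((m:ℝ)+1)^(j+1) * (2:ℝ)⁻¹ ^ m) with hu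
  have husum : Summable u := (summable_aux (j+1)).mul_left _
  have hbound : ∀ (m : ℕ), ∀ y ∈ Metric.ball (0:ℝ) 2⁻¹,
      ‖bcoef j m * ((m:ℝ) * y^(m-1))‖ ≤ u m := by
    intro m y hy
    rw [Metric.mem_ball, dist_zero_right, Real.norm_eq_abs] at hy
    rw [Real.norm_eq_abs, abs_mul, abs_mul, abs_pow]
    have hb := abs_bcoef_le j m
    have hy1 : |y|^(m-1) ≤ ((2:ℝ)⁻¹)^(m-1) := pow_le_pow_left₀ (abs_nonneg y) hy.le _
    have h2 : |(m:ℝ)| * |y|^(m-1) ≤ ((m:ℝ)+1) * (2 * (2:ℝ)⁻¹^m) := by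
      rw [Nat.abs_cast]
      exact mul_le_mul (by linarith) (le_trans hy1 (half_pow_pred m))
        (by positivity) (by positivity)
    calc |bcoef j m| * (|(m:ℝ)| * |y|^(m-1))
        ≤ (2*(((m:ℝ)+1)*((j:ℝ)+1))^j) * (((m:ℝ)+1) * (2 * (2:ℝ)⁻¹^m)) :=
          mul_le_mul hb h2 (by positivity) (by positivity)
    _ = 4 * ((j:ℝ)+1)^j * (((m:ℝ)+1)^(j+1) * (2:ℝ)⁻¹^m) := by rw [mul_pow]; ring
    _ ≤ u m := by
        have hj : ((j:ℝ)+1)^j ≤ ((j:ℝ)+1)^(j+1) :=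
          pow_le_pow_right₀ (by linarith [j.cast_nonneg (α := ℝ)]) (by omega)
        have hnn : (0:ℝ) ≤ ((m:ℝ)+1)^(j+1) * (2:ℝ)⁻¹^m := by positivity
        have hAC := mul_le_mul_of_nonneg_right hj hnn
        have hBC : (0:ℝ) ≤ ((j:ℝ)+1)^(j+1) * (((m:ℝ)+1)^(j+1) * (2:ℝ)⁻¹^m) := by
          positivity
        show 4 * ((j:ℝ)+1)^j * (((m:ℝ)+1)^(j+1) * (2:ℝ)⁻¹^m)
          ≤ 8 * ((j:ℝ)+1)^(j+1) * (((m:ℝ)+1)^(j+1) * (2:ℝ)⁻¹ ^ m)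
        nlinarith [hAC, hBC]
  have hder : ∀ (m : ℕ), ∀ y ∈ Metric.ball (0:ℝ) 2⁻¹,
      HasDerivAt (fun z : ℝ => bcoef j m * z^m) (bcoef j m * ((m:ℝ) * y^(m-1))) y :=
    fun m y _ => (hasDerivAt_pow m y).const_mul _
  have h0 : Summable (fun m : ℕ => bcoef j m * (0:ℝ)^m) := by
    apply summable_of_ne_finset_zero (s := {0})
    intro m hm
    simp only [Finset.mem_singleton] at hm
    rw [zero_pow hm, mul_zero]
  have H := hasDerivAt_tsum_of_isPreconnected husum Metric.isOpen_ball
    (convex_ball (0:ℝ) 2⁻¹).isPreconnected hder hbound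
    (Metric.mem_ball_self (by norm_num)) h0 hs
  have hsum' : Summable (fun m : ℕ => bcoef j m * ((m:ℝ) * s^(m-1))) :=
    Summable.of_norm_bounded husum fun m => hbound m s hs
  have hval : (∑' m : ℕ, bcoef j m * ((m:ℝ) * s^(m-1))) = gser (j+1) s := by
    rw [Summable.tsum_eq_zero_add hsum']
    simp only [Nat.cast_zero, zero_mul, mul_zero, zero_add]
    rw [gser]
    refine tsum_congr fun m => ?_
    have h3 : m + (j+1) = m+1+j := by omega
    have hdf : (m+1+j).descFactorial (j+1) = (m+1) * ((m+1+j).descFactorial j) := by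
      rw [Nat.descFactorial_succ]
      congr 1
      omega
    rw [bcoef, bcoef, h3, hdf, Nat.add_sub_cancel]
    push_cast
    ring
  rw [hval] at H
  exact H

lemma gser_zero_val (j : ℕ) : gser j 0 = (j.factorial : ℝ) * acoef j := by
  rw [gser, tsum_eq_single 0 (fun m hm => by rw [zero_pow hm, mul_zero])]
  rw [pow_zero, mul_one, bcoef, Nat.zero_add, Nat.descFactorial_self]

lemma kappaG_eventuallyEq :
    kappaG =ᶠ[𝓝 (0:ℝ)] fun s => Real.exp (gser 0 s) := by
  filter_upwards [Metric.ball_mem_nhds (0:ℝ) (by norm_num : (0:ℝ) < 2⁻¹)] with s hs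
  rw [Metric.mem_ball, dist_zero_right, Real.norm_eq_abs] at hs
  have hs1 : |s| < 1 := lt_trans hs (by norm_num)
  have h := hasSum_log_kappaG hs1
  have h2 : HasSum (fun m : ℕ => bcoef 0 m * s^m) (Real.log (kappaG s)) := by
    have h1 : HasSum (fun m : ℕ => (fun n : ℕ => bcoef 0 n * s^n) (m + 2))
        (Real.log (kappaG s)) := by
      refine h.congr_fun fun m => ?_
      show bcoef 0 (m+2) * s^(m+2) = acoef (m+2) * s^(m+2)
      rw [bcoef_zero]
    have h4 := (hasSum_nat_add_iff (f := fun n : ℕ => bcoef 0 n * s^n) 2).1 h1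
    have h5 : ∑ i ∈ Finset.range 2, bcoef 0 i * s^i = 0 := by
      rw [Finset.sum_range_succ, Finset.sum_range_one, bcoef_zero, bcoef_zero,
        acoef_zero, acoef_one]
      ring
    rwa [h5, add_zero] at h4
  have h6 : gser 0 s = Real.log (kappaG s) := by
    rw [gser]
    exact h2.tsum_eq
  rw [h6, Real.exp_log (kappaG_pos (by linarith [(abs_lt.1 hs1).1]))]

lemma iter_step {f h : ℝ → ℝ}
    (H : ∀ s ∈ Metric.ball (0:ℝ) 2⁻¹, HasDerivAt f (h s) s) (n : ℕ) :
    iteratedDeriv (n+1) f 0 = iteratedDeriv n h 0 := by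
  rw [iteratedDeriv_succ']
  apply Filter.EventuallyEq.iteratedDeriv_eq
  filter_upwards [Metric.ball_mem_nhds (0:ℝ) (by norm_num : (0:ℝ) < 2⁻¹)] with s hs
  exact (H s hs).deriv

lemma hD0 {s : ℝ} (hs : s ∈ Metric.ball (0:ℝ) 2⁻¹) :
    HasDerivAt (fun x => Real.exp (gser 0 x)) (gser 1 s * Real.exp (gser 0 s)) s := by
  have h := (gser_hasDerivAt 0 hs).exp
  rwa [mul_comm] at h

lemma hD1 {s : ℝ} (hs : s ∈ Metric.ball (0:ℝ) 2⁻¹) :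
    HasDerivAt (fun x => gser 1 x * Real.exp (gser 0 x))
      ((gser 2 s + gser 1 s * gser 1 s) * Real.exp (gser 0 s)) s := by
  have h := (gser_hasDerivAt 1 hs).mul (hD0 hs)
  refine h.congr_deriv ?_
  simp only [Pi.mul_apply, Pi.add_apply, Nat.reduceAdd]
  ring

lemma hD2 {s : ℝ} (hs : s ∈ Metric.ball (0:ℝ) 2⁻¹) :
    HasDerivAt (fun x => (gser 2 x + gser 1 x * gser 1 x) * Real.exp (gser 0 x))
      ((gser 3 s + 3*gser 2 s*gser 1 s + gser 1 s*gser 1 s*gser 1 s)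
        * Real.exp (gser 0 s)) s := by
  have h := ((gser_hasDerivAt 2 hs).add
    ((gser_hasDerivAt 1 hs).mul (gser_hasDerivAt 1 hs))).mul (hD0 hs)
  refine h.congr_deriv ?_
  simp only [Pi.mul_apply, Pi.add_apply, Nat.reduceAdd]
  ring

lemma hD3 {s : ℝ} (hs : s ∈ Metric.ball (0:ℝ) 2⁻¹) :
    HasDerivAt (fun x => (gser 3 x + 3*gser 2 x*gser 1 x + gser 1 x*gser 1 x*gser 1 x)
        * Real.exp (gser 0 x))
      ((gser 4 s + 4*gser 3 s*gser 1 s + 3*gser 2 s*gser 2 s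
          + 6*gser 2 s*(gser 1 s*gser 1 s) + gser 1 s*gser 1 s*gser 1 s*gser 1 s)
        * Real.exp (gser 0 s)) s := by
  have h := (((gser_hasDerivAt 3 hs).add
      (((gser_hasDerivAt 2 hs).const_mul 3).mul (gser_hasDerivAt 1 hs))).add
    (((gser_hasDerivAt 1 hs).mul (gser_hasDerivAt 1 hs)).mul
      (gser_hasDerivAt 1 hs))).mul (hD0 hs)
  refine h.congr_deriv ?_
  simp only [Pi.mul_apply, Pi.add_apply, Nat.reduceAdd]
  ring

lemma hD4 {s : ℝ} (hs : s ∈ Metric.ball (0:ℝ) 2⁻¹) :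
    HasDerivAt (fun x => (gser 4 x + 4*gser 3 x*gser 1 x + 3*gser 2 x*gser 2 x
          + 6*gser 2 x*(gser 1 x*gser 1 x) + gser 1 x*gser 1 x*gser 1 x*gser 1 x)
        * Real.exp (gser 0 x))
      ((gser 5 s + 5*gser 4 s*gser 1 s + 10*gser 3 s*gser 2 s
          + 10*gser 3 s*(gser 1 s*gser 1 s) + 15*(gser 2 s*gser 2 s)*gser 1 s
          + 10*gser 2 s*(gser 1 s*gser 1 s*gser 1 s)
          + gser 1 s*gser 1 s*gser 1 s*gser 1 s*gser 1 s)
        * Real.exp (gser 0 s)) s := by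
  have h := ((((gser_hasDerivAt 4 hs).add
      (((gser_hasDerivAt 3 hs).const_mul 4).mul (gser_hasDerivAt 1 hs))).add
      (((gser_hasDerivAt 2 hs).const_mul 3).mul (gser_hasDerivAt 2 hs))).add
      ((((gser_hasDerivAt 2 hs).const_mul 6).mul
        ((gser_hasDerivAt 1 hs).mul (gser_hasDerivAt 1 hs))).add
       ((((gser_hasDerivAt 1 hs).mul (gser_hasDerivAt 1 hs)).mul
          (gser_hasDerivAt 1 hs)).mul (gser_hasDerivAt 1 hs)))).mul (hD0 hs)
  refine (h.congr_deriv ?_).congr_of_eventuallyEq (Filter.Eventually.of_forall fun x => ?_)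
  · simp only [Pi.mul_apply, Pi.add_apply, Nat.reduceAdd]
    ring
  · simp only [Pi.mul_apply, Pi.add_apply]
    ring

lemma acoef_two_val : acoef 2 = -(π^2/12) := by
  have h := acoef_add_two 0
  norm_num at h
  rw [h, zetaVal_two, ccoef]
  norm_num
  ring

lemma acoef_three_val : acoef 3 = zetaVal 3 / 2 := by
  have h := acoef_add_two 1
  norm_num at h
  rw [h, ccoef]
  norm_num
  ring

lemma acoef_four_val : acoef 4 = -(7*π^4/1440) := by
  have h := acoef_add_two 2
  norm_num at h
  rw [h, zetaVal_four, ccoef]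
  norm_num
  ring

lemma acoef_five_val : acoef 5 = 3 * zetaVal 5 / 8 := by
  have h := acoef_add_two 3
  norm_num at h
  rw [h, ccoef]
  norm_num
  ring

theorem kappaG_expansion :
    (∀ s : ℝ, |s| < 1 →
      kappaG s = Real.exp (2 * ∑' k : ℕ,
        zetaVal (k + 2) / (k + 2) * ((2 : ℝ) ^ (1 - ((k : ℝ) + 2)) - 1) * (-s) ^ (k + 2))) ∧
    kappaG 0 = 1 ∧
    iteratedDeriv 1 kappaG 0 = 0 ∧
    iteratedDeriv 2 kappaG 0 / 2 = -(π ^ 2 / 12) ∧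
    iteratedDeriv 3 kappaG 0 / 6 = zetaVal 3 / 2 ∧
    iteratedDeriv 4 kappaG 0 / 24 = -(π ^ 4 / 720) ∧
    iteratedDeriv 5 kappaG 0 / 120 = 3 * zetaVal 5 / 8 - π ^ 2 * zetaVal 3 / 24 := by
  have hED : ∀ n : ℕ, iteratedDeriv n kappaG 0
      = iteratedDeriv n (fun x => Real.exp (gser 0 x)) 0 :=
    fun n => Filter.EventuallyEq.iteratedDeriv_eq n kappaG_eventuallyEq
  have hg00 : gser 0 0 = 0 := by rw [gser_zero_val, acoef_zero, mul_zero]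
  have hg10 : gser 1 0 = 0 := by rw [gser_zero_val, acoef_one, mul_zero]
  have hg20 : gser 2 0 = 2 * acoef 2 := by
    rw [gser_zero_val]; norm_num [Nat.factorial]
  have hg30 : gser 3 0 = 6 * acoef 3 := by
    rw [gser_zero_val]; norm_num [Nat.factorial]
  have hg40 : gser 4 0 = 24 * acoef 4 := by
    rw [gser_zero_val]; norm_num [Nat.factorial]
  have hg50 : gser 5 0 = 120 * acoef 5 := by
    rw [gser_zero_val]; norm_num [Nat.factorial]
  have hE0 : Real.exp (gser 0 0) = 1 := by rw [hg00, Real.exp_zero]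
  refine ⟨fun s hs => kappaG_eq_exp hs, ?_, ?_, ?_, ?_, ?_, ?_⟩
  · rw [kappaG_eq]
    norm_num [Real.Gamma_one]
  · rw [hED 1, iter_step (fun s hs => hD0 hs) 0, iteratedDeriv_zero]
    simp [hg10]
  · rw [hED 2, iter_step (fun s hs => hD0 hs) 1, iter_step (fun s hs => hD1 hs) 0,
      iteratedDeriv_zero]
    simp only [hg10, hg20, hE0, acoef_two_val]
    ring
  · rw [hED 3, iter_step (fun s hs => hD0 hs) 2, iter_step (fun s hs => hD1 hs) 1,
      iter_step (fun s hs => hD2 hs) 0, iteratedDeriv_zero]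
    simp only [hg10, hg20, hg30, hE0, acoef_three_val]
    ring
  · rw [hED 4, iter_step (fun s hs => hD0 hs) 3, iter_step (fun s hs => hD1 hs) 2,
      iter_step (fun s hs => hD2 hs) 1, iter_step (fun s hs => hD3 hs) 0,
      iteratedDeriv_zero]
    simp only [hg10, hg20, hg30, hg40, hE0, acoef_two_val, acoef_four_val]
    ring
  · rw [hED 5, iter_step (fun s hs => hD0 hs) 4, iter_step (fun s hs => hD1 hs) 3,
      iter_step (fun s hs => hD2 hs) 2, iter_step (fun s hs => hD3 hs) 1,
      iter_step (fun s hs => hD4 hs) 0, iteratedDeriv_zero]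
    simp only [hg10, hg20, hg30, hg40, hg50, hE0, acoef_two_val, acoef_three_val,
      acoef_five_val]
    ring
end
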